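/- For every real α > 1/2 and every integer T ≥ 1, the probability that there exists an integer n > T such that |μ_n − p| > √(α·ln n / n) is at most 2 / ((2α−1)·T^{2α−1}). -/

import Mathlib

/-!
Hoeffding's inequality, applied to both tails at level `δₙ = √(α log n / n)`, gives
`P(|μₙ - p| > δₙ) ≤ 2 exp(-2 n δₙ²) = 2 n^(-2α)`. A union bound over `n > T` and comparison of
`∑_{n > T} n^(-2α)` with `∫_T^∞ x^(-2α) dx = T^(1-2α) / (2α - 1)` give the claim.
-/

open MeasureTheory ProbabilityTheory Real

theorem tsum_rpow_neg_nat_add_le {s : ℝ} (hs : 1 < s) {N : ℕ} (hN : 0 < N) :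
    ∑' m : ℕ, ((m + N + 1 : ℕ) : ℝ) ^ (-s) ≤ 1 / ((s - 1) * N ^ (s - 1)) := by
  have hN' : (0 : ℝ) < N := Nat.cast_pos.mpr hN
  have hanti : AntitoneOn (fun x : ℝ ↦ x ^ (-s)) (Set.Ici (N : ℝ)) := fun x hx y _ hxy ↦
    rpow_le_rpow_of_nonpos (hN'.trans_le hx) hxy (by linarith)
  calc ∑' m : ℕ, ((m + N + 1 : ℕ) : ℝ) ^ (-s)
      ≤ ∫ x in Set.Ioi (N : ℝ), x ^ (-s) :=
        hanti.tsum_comp_add_le_integral N (integrableOn_Ioi_rpow_of_lt (by linarith) hN')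
          fun x hx ↦ rpow_nonneg (hN'.trans hx).le _
    _ = 1 / ((s - 1) * N ^ (s - 1)) := by
        rw [integral_Ioi_rpow_of_lt (by linarith) hN', show -s + 1 = -(s - 1) by ring,
          rpow_neg hN'.le]
        field_simp

theorem measure_exists_gt_le_tsum {Ω : Type*} [MeasurableSpace Ω] (μ : Measure Ω)
    (P : ℕ → Ω → Prop) (N : ℕ) :
    μ {ω | ∃ n, N < n ∧ P n ω} ≤ ∑' m : ℕ, μ {ω | P (m + N + 1) ω} := by
  refine (measure_mono fun ω hω ↦ ?_).trans (measure_iUnion_le _)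
  obtain ⟨n, hNn, hn⟩ := hω
  exact Set.mem_iUnion.mpr ⟨n - N - 1, by rwa [show n - N - 1 + N + 1 = n by omega]⟩

section

variable {Ω : Type*} [MeasurableSpace Ω] {μ : Measure Ω} [IsProbabilityMeasure μ]

theorem measureReal_abs_sum_sub_integral_ge_le {X : ℕ → Ω → ℝ} (hindep : iIndepFun X μ)
    (hmeas : ∀ k, AEMeasurable (X k) μ) {a b : ℝ} (hab : ∀ k, ∀ᵐ ω ∂μ, X k ω ∈ Set.Icc a b)
    (n : ℕ) {ε : ℝ} (hε : 0 ≤ ε) :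
    μ.real {ω | ε ≤ |∑ k ∈ Finset.range n, (X k ω - μ[X k])|}
      ≤ 2 * exp (-2 * ε ^ 2 / (n * (b - a) ^ 2)) := by
  set S : Ω → ℝ := fun ω ↦ ∑ k ∈ Finset.range n, (X k ω - μ[X k])
  have hcentered := hindep.comp (fun k (x : ℝ) ↦ x - μ[X k]) fun _ ↦ measurable_id.sub_const _
  have hS : HasSubgaussianMGF S (n * (‖b - a‖₊ / 2) ^ 2) μ := by
    simpa only [Function.comp_apply, Finset.sum_const, Finset.card_range, nsmul_eq_mul] using
      HasSubgaussianMGF.sum_of_iIndepFun hcentered (s := Finset.range n)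
        fun k _ ↦ hasSubgaussianMGF_of_mem_Icc (hmeas k) (hab k)
  have htail : ∀ Y : Ω → ℝ, HasSubgaussianMGF Y (n * (‖b - a‖₊ / 2) ^ 2) μ →
      μ.real {ω | ε ≤ Y ω} ≤ exp (-2 * ε ^ 2 / (n * (b - a) ^ 2)) := by
    intro Y hY
    convert hY.measure_ge_le hε using 2
    push_cast
    rw [Real.norm_eq_abs, div_pow, sq_abs,
      show (2 : ℝ) * (n * ((b - a) ^ 2 / 2 ^ 2)) = n * (b - a) ^ 2 / 2 by ring,
      div_div_eq_mul_div]
    ring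
  calc μ.real {ω | ε ≤ |S ω|} ≤ μ.real ({ω | ε ≤ S ω} ∪ {ω | ε ≤ (-S) ω}) := by
        refine measureReal_mono fun ω (hω : ε ≤ |S ω|) ↦ ?_
        rcases le_abs'.mp hω with h | h
        · exact Or.inr (show ε ≤ -S ω by linarith)
        · exact Or.inl h
    _ ≤ μ.real {ω | ε ≤ S ω} + μ.real {ω | ε ≤ (-S) ω} := measureReal_union_le _ _
    _ ≤ 2 * exp (-2 * ε ^ 2 / (n * (b - a) ^ 2)) := by
        linarith [htail S hS, htail (-S) hS.neg]

theorem measure_abs_sum_div_sub_gt_le {X : ℕ → Ω → ℝ} (hindep : iIndepFun X μ)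
    (hmeas : ∀ k, AEMeasurable (X k) μ) {a b : ℝ} (hab : ∀ k, ∀ᵐ ω ∂μ, X k ω ∈ Set.Icc a b)
    {p : ℝ} (hmean : ∀ k, μ[X k] = p) {n : ℕ} (hn : 0 < n) {δ : ℝ} (hδ : 0 ≤ δ) :
    μ {ω | δ < |(∑ k ∈ Finset.range n, X k ω) / n - p|}
      ≤ ENNReal.ofReal (2 * exp (-2 * n * δ ^ 2 / (b - a) ^ 2)) := by
  have hn' : (0 : ℝ) < n := Nat.cast_pos.mpr hn
  have hsub : {ω | δ < |(∑ k ∈ Finset.range n, X k ω) / n - p|}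
      ⊆ {ω | n * δ ≤ |∑ k ∈ Finset.range n, (X k ω - μ[X k])|} := by
    intro ω (hω : δ < |(∑ k ∈ Finset.range n, X k ω) / n - p|)
    have hsum : ∑ k ∈ Finset.range n, (X k ω - μ[X k])
        = n * ((∑ k ∈ Finset.range n, X k ω) / n - p) := by
      simp only [hmean, Finset.sum_sub_distrib, Finset.sum_const, Finset.card_range,
        nsmul_eq_mul]
      field_simp
    show n * δ ≤ _
    rw [hsum, abs_mul, Nat.abs_cast]
    exact mul_le_mul_of_nonneg_left hω.le hn'.le
  calc μ {ω | δ < |(∑ k ∈ Finset.range n, X k ω) / n - p|}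
      ≤ ENNReal.ofReal (μ.real {ω | n * δ ≤ |∑ k ∈ Finset.range n, (X k ω - μ[X k])|}) := by
        rw [ofReal_measureReal]
        exact measure_mono hsub
    _ ≤ ENNReal.ofReal (2 * exp (-2 * n * δ ^ 2 / (b - a) ^ 2)) := by
        refine ENNReal.ofReal_le_ofReal ?_
        convert measureReal_abs_sum_sub_integral_ge_le hindep hmeas hab n
          (mul_nonneg hn'.le hδ) using 3
        rw [← mul_div_mul_left _ _ hn'.ne']
        ring

theorem measure_abs_sum_div_sub_gt_sqrt_log_le {X : ℕ → Ω → ℝ} (hindep : iIndepFun X μ)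
    (hmeas : ∀ k, AEMeasurable (X k) μ) (hrange : ∀ k, ∀ᵐ ω ∂μ, X k ω ∈ Set.Icc (0 : ℝ) 1)
    {p : ℝ} (hmean : ∀ k, μ[X k] = p) {α : ℝ} (hα : 0 ≤ α) {n : ℕ} (hn : 0 < n) :
    μ {ω | |(∑ k ∈ Finset.range n, X k ω) / n - p| > √(α * log n / n)}
      ≤ ENNReal.ofReal (2 * (n : ℝ) ^ (-(2 * α))) := by
  have hn' : (0 : ℝ) < n := Nat.cast_pos.mpr hn
  have hlog : 0 ≤ α * log n / n := by
    have := log_natCast_nonneg n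
    positivity
  convert measure_abs_sum_div_sub_gt_le hindep hmeas hrange hmean hn (sqrt_nonneg _) using 3
  rw [sq_sqrt hlog, rpow_def_of_pos hn', sub_zero, one_pow, div_one]
  field_simp

end

theorem stmt_8_general {Ω : Type*} [MeasurableSpace Ω] (μ : Measure Ω) [IsProbabilityMeasure μ]
    (X : ℕ → Ω → ℝ) (p : ℝ)
    (hmeas : ∀ n, Measurable (X n))
    (hrange : ∀ n ω, X n ω ∈ Set.Icc (0 : ℝ) 1)
    (hindep : iIndepFun X μ)
    (hident : ∀ n, IdentDistrib (X n) (X 0) μ μ)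
    (hmean : ∫ ω, X 0 ω ∂μ = p)
    (α : ℝ) (hα : 1 / 2 < α) (T : ℕ) (hT : 1 ≤ T) :
    μ {ω | ∃ n : ℕ, T < n ∧
        |(∑ k ∈ Finset.range n, X k ω) / n - p| > Real.sqrt (α * Real.log n / n)}
      ≤ ENNReal.ofReal (2 / ((2 * α - 1) * (T : ℝ) ^ (2 * α - 1))) := by
  have hmean' : ∀ k, μ[X k] = p := fun k ↦ (hident k).integral_eq.trans hmean
  have hsummable : Summable fun m : ℕ ↦ 2 * ((m + T + 1 : ℕ) : ℝ) ^ (-(2 * α)) :=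
    ((summable_nat_add_iff (T + 1)).mpr (summable_nat_rpow.mpr (by linarith))).mul_left 2
  calc _ ≤ ∑' m : ℕ, ENNReal.ofReal (2 * ((m + T + 1 : ℕ) : ℝ) ^ (-(2 * α))) :=
        (measure_exists_gt_le_tsum μ _ T).trans <| ENNReal.tsum_le_tsum fun m ↦
          measure_abs_sum_div_sub_gt_sqrt_log_le hindep (fun k ↦ (hmeas k).aemeasurable)
            (fun k ↦ ae_of_all _ (hrange k)) hmean' (by linarith) (by omega)
    _ = ENNReal.ofReal (∑' m : ℕ, 2 * ((m + T + 1 : ℕ) : ℝ) ^ (-(2 * α))) :=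
        (ENNReal.ofReal_tsum_of_nonneg (fun m ↦ by positivity) hsummable).symm
    _ ≤ ENNReal.ofReal (2 / ((2 * α - 1) * (T : ℝ) ^ (2 * α - 1))) := by
        refine ENNReal.ofReal_le_ofReal ?_
        rw [tsum_mul_left, ← mul_one_div]
        exact mul_le_mul_of_nonneg_left (tsum_rpow_neg_nat_add_le (by linarith) hT) zero_le_two

/-- For every real `α > 1/2` and every integer `T ≥ 1`, the probability that there
exists an integer `n > T` such that `|μ_n − p| > √(α·ln n / n)` is at most
`2 / ((2α−1)·T^{2α−1})`.  Here `X k` is the `(k+1)`-st sample of an i.i.d. sequence of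
`[0,1]`-valued random variables with mean `p`, and `μ_n` is the empirical mean of the first
`n` samples. -/
theorem stmt_8 {Ω : Type*} [MeasurableSpace Ω] (μ : Measure Ω) [IsProbabilityMeasure μ]
    (X : ℕ → Ω → ℝ) (p : ℝ) (hp : p ∈ Set.Icc (0 : ℝ) 1)
    (hmeas : ∀ n, Measurable (X n))
    (hrange : ∀ n ω, X n ω ∈ Set.Icc (0 : ℝ) 1)
    (hindep : iIndepFun X μ)
    (hident : ∀ n, IdentDistrib (X n) (X 0) μ μ)
    (hmean : ∫ ω, X 0 ω ∂μ = p)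
    (α : ℝ) (hα : 1 / 2 < α) (T : ℕ) (hT : 1 ≤ T) :
    μ {ω | ∃ n : ℕ, T < n ∧
        |(∑ k ∈ Finset.range n, X k ω) / n - p| > Real.sqrt (α * Real.log n / n)}
      ≤ ENNReal.ofReal (2 / ((2 * α - 1) * (T : ℝ) ^ (2 * α - 1))) :=
  stmt_8_general μ X p hmeas hrange hindep hident hmean α hα T hT
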